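/- The function κ is a probability density on ℝ: the integral over ω ∈ ℝ of 2·sech(πω)/((ln 4)·(1 + 4ω²)) dω equals 1. -/

import Mathlib

open Real MeasureTheory

/-- The kernel integrand `h(x,y,ω)`. -/
noncomputable def h (x y ω : ℝ) : ℝ :=
  (Real.sqrt x * Real.cos (ω * Real.log x) - Real.sqrt y * Real.cos (ω * Real.log y)) ^ 2 +
  (Real.sqrt x * Real.sin (ω * Real.log x) - Real.sqrt y * Real.sin (ω * Real.log y)) ^ 2

/-- Hyperbolic secant. -/
noncomputable def sech (t : ℝ) : ℝ := 2 / (Real.exp t + Real.exp (-t))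

/-- The JS kernel density `κ(ω)`. -/
noncomputable def kJ (ω : ℝ) : ℝ := 2 * sech (Real.pi * ω) / (Real.log 4 * (1 + 4 * ω ^ 2))

/-- The χ² kernel density `κ_χ(ω)`. -/
noncomputable def kChi (ω : ℝ) : ℝ := sech (Real.pi * ω)

/-- One-dimensional Jensen–Shannon divergence (with `0·log 0 = 0`, `f_J(0,0) = 0`,
which hold automatically since `Real.log 0 = 0` and `0/0 = 0` in Lean). -/
noncomputable def fJ (x y : ℝ) : ℝ :=
  x * Real.log (2 * x / (x + y)) + y * Real.log (2 * y / (x + y))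

/-- One-dimensional symmetrized χ² divergence (with `f_χ(0,0) = 0`,
which holds automatically since `0/0 = 0` in Lean). -/
noncomputable def fChi (x y : ℝ) : ℝ := (x - y) ^ 2 / (x + y)

/-- One-dimensional Hellinger distance. -/
noncomputable def fH (x y : ℝ) : ℝ := (Real.sqrt x - Real.sqrt y) ^ 2

/-!
Writing `(1 + b²)⁻¹ = ∫₀^∞ e^{-t} cos (b t) dt` and exchanging the integrals reduces the claim to
the Fourier transform of `sech`, `∫ cos (ξ x) / cosh x dx = π / cosh (π ξ / 2)`. The substitution
`y = (1 + tanh x) / 2` turns that integral into the Beta integral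
`B(s, 1 - s) = Γ(s) Γ(1 - s) = π / sin (π s)` at `s = (1 + i ξ) / 2`. What is left is
`∫₀^∞ e^{-t} / cosh t dt = log 2 = (log 4) / 2`.
-/

open Set Filter Topology

lemma sech_eq_inv_cosh (t : ℝ) : sech t = (cosh t)⁻¹ := by
  rw [sech, cosh_eq, inv_div]

lemma exp_neg_two_mul (x : ℝ) : rexp (-2 * x) = (rexp x)⁻¹ ^ 2 := by
  rw [← exp_neg, ← exp_nat_mul]
  push_cast
  ring_nf

lemma ofReal_exp_cpow (y : ℝ) (w : ℂ) : ((rexp y : ℝ) : ℂ) ^ w = Complex.exp (y * w) := by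
  rw [Complex.cpow_def_of_ne_zero (by exact_mod_cast (exp_pos y).ne'),
    ← Complex.ofReal_log (exp_pos y).le, log_exp]

lemma one_add_sq_div_four_le_cosh (x : ℝ) : (1 + x ^ 2) / 4 ≤ cosh x := by
  have h := quadratic_le_exp_of_nonneg (abs_nonneg x)
  rw [← cosh_abs, cosh_eq]
  nlinarith [exp_pos (-|x|), abs_nonneg x, sq_abs x]

lemma integrable_inv_cosh : Integrable (fun x : ℝ => (cosh x)⁻¹) := by
  refine (integrable_inv_one_add_sq.const_mul 4).mono'
    (continuous_cosh.inv₀ fun x => (cosh_pos x).ne').aestronglyMeasurable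
    (Eventually.of_forall fun x => ?_)
  rw [norm_inv, norm_of_nonneg (cosh_pos x).le, ← div_eq_mul_inv,
    inv_le_comm₀ (cosh_pos x) (by positivity), inv_div]
  exact one_add_sq_div_four_le_cosh x

noncomputable def halfOneAddTanh (x : ℝ) : ℝ := (1 + rexp (-2 * x))⁻¹

lemma image_halfOneAddTanh : halfOneAddTanh '' univ = Ioo 0 1 := by
  ext y
  simp only [image_univ, mem_range, mem_Ioo, halfOneAddTanh]
  constructor
  · rintro ⟨x, rfl⟩
    exact ⟨by positivity, inv_lt_one_of_one_lt₀ (by linarith [exp_pos (-2 * x)])⟩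
  · rintro ⟨hy₀, hy₁⟩
    have hy : 0 < y⁻¹ - 1 := sub_pos.2 ((one_lt_inv₀ hy₀).2 hy₁)
    refine ⟨-log (y⁻¹ - 1) / 2, ?_⟩
    rw [show -2 * (-log (y⁻¹ - 1) / 2) = log (y⁻¹ - 1) by ring, exp_log hy]
    simp

lemma injective_halfOneAddTanh : Function.Injective halfOneAddTanh := fun a b hab => by
  simpa using exp_injective (add_left_cancel (inv_injective hab))

lemma hasDerivAt_halfOneAddTanh (x : ℝ) :
    HasDerivAt halfOneAddTanh (2 * cosh x ^ 2)⁻¹ x := by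
  refine ((((hasDerivAt_id' x).const_mul (-2)).exp.const_add 1).fun_inv
    (by positivity)).congr_deriv ?_
  rw [cosh_eq, exp_neg, exp_neg_two_mul]
  field_simp

lemma halfOneAddTanh_eq_exp (x : ℝ) : halfOneAddTanh x = rexp (x - log (2 * cosh x)) := by
  rw [halfOneAddTanh, exp_sub, exp_log (by positivity), cosh_eq, exp_neg, exp_neg_two_mul]
  field_simp

lemma one_sub_halfOneAddTanh_eq_exp (x : ℝ) :
    1 - halfOneAddTanh x = rexp (-x - log (2 * cosh x)) := by
  rw [halfOneAddTanh, exp_sub, exp_log (by positivity), cosh_eq, exp_neg, exp_neg_two_mul]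
  field_simp
  ring

lemma abs_deriv_smul_betaIntegrand_halfOneAddTanh (s : ℂ) (x : ℝ) :
    |(2 * cosh x ^ 2)⁻¹| • ((halfOneAddTanh x : ℂ) ^ (s - 1) *
      (1 - (halfOneAddTanh x : ℂ)) ^ ((1 - s) - 1)) =
      Complex.exp ((2 * s - 1) * x) / (cosh x : ℂ) := by
  have hcosh : Complex.cosh x = Complex.exp (log (2 * cosh x) : ℝ) / 2 := by
    rw [← Complex.ofReal_exp, exp_log (by positivity)]
    push_cast
    ring
  rw [← Complex.ofReal_one, ← Complex.ofReal_sub, one_sub_halfOneAddTanh_eq_exp,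
    halfOneAddTanh_eq_exp, ofReal_exp_cpow, ofReal_exp_cpow, abs_of_pos (by positivity),
    Complex.real_smul]
  push_cast
  rw [hcosh, eq_div_iff (by simp [Complex.exp_ne_zero])]
  generalize ((log (2 * cosh x) : ℝ) : ℂ) = L
  have hL : (2 * (Complex.exp L / 2) ^ 2)⁻¹ * (Complex.exp L / 2) = Complex.exp (-L) := by
    rw [Complex.exp_neg]
    field_simp
  rw [mul_right_comm, hL, ← Complex.exp_add, ← Complex.exp_add]
  congr 1
  ring

theorem integral_cexp_mul_div_cosh {a : ℂ} (ha₀ : -1 < a.re) (ha₁ : a.re < 1) :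
    ∫ x : ℝ, Complex.exp (a * x) / (cosh x : ℂ) = π / Complex.cos (π * a / 2) := by
  set s : ℂ := (1 + a) / 2 with hs
  have hs₀ : 0 < s.re := by simp [s]; linarith
  have hs₁ : 0 < (1 - s).re := by simp [s]; linarith
  calc ∫ x : ℝ, Complex.exp (a * x) / (cosh x : ℂ)
      = ∫ x in univ, |(2 * cosh x ^ 2)⁻¹| • ((halfOneAddTanh x : ℂ) ^ (s - 1) *
          (1 - (halfOneAddTanh x : ℂ)) ^ ((1 - s) - 1)) := by
        simp only [abs_deriv_smul_betaIntegrand_halfOneAddTanh, setIntegral_univ, hs]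
        ring_nf
    _ = ∫ y in Ioo (0 : ℝ) 1, (y : ℂ) ^ (s - 1) * (1 - (y : ℂ)) ^ ((1 - s) - 1) := by
        rw [← image_halfOneAddTanh, integral_image_eq_integral_abs_deriv_smul MeasurableSet.univ
          (fun x _ => (hasDerivAt_halfOneAddTanh x).hasDerivWithinAt)
          injective_halfOneAddTanh.injOn]
    _ = Complex.betaIntegral s (1 - s) := by
        rw [Complex.betaIntegral, intervalIntegral.integral_of_le zero_le_one,
          integral_Ioc_eq_integral_Ioo]
    _ = π / Complex.sin (π * s) := by
        rw [← Complex.Gamma_mul_Gamma_one_sub, Complex.Gamma_mul_Gamma_eq_betaIntegral hs₀ hs₁,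
          add_sub_cancel, Complex.Gamma_one, one_mul]
    _ = π / Complex.cos (π * a / 2) := by
        rw [← Complex.sin_add_pi_div_two, hs]
        ring_nf

theorem integral_cos_mul_div_cosh (t : ℝ) :
    ∫ x : ℝ, cos (t * x) / cosh x = π / cosh (π * t / 2) := by
  have hint : Integrable (fun x : ℝ => Complex.exp ((t * Complex.I) * x) / (cosh x : ℂ)) := by
    refine integrable_inv_cosh.mono' (Measurable.aestronglyMeasurable (by fun_prop))
      (Eventually.of_forall fun x => ?_)
    rw [norm_div, Complex.norm_real, norm_of_nonneg (cosh_pos x).le,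
      show (t * Complex.I) * x = ((t * x : ℝ) : ℂ) * Complex.I by push_cast; ring,
      Complex.norm_exp_ofReal_mul_I, one_div]
  have h := integral_re hint
  rw [integral_cexp_mul_div_cosh (by simp) (by simp),
    show (π : ℂ) * (t * Complex.I) / 2 = ((π * t / 2 : ℝ) : ℂ) * Complex.I by push_cast; ring,
    Complex.cos_mul_I, ← Complex.ofReal_cosh, ← Complex.ofReal_div, RCLike.re_to_complex,
    Complex.ofReal_re] at h
  rw [← h]
  congr 1 with x
  rw [RCLike.re_to_complex, show (t * Complex.I) * x = ((t * x : ℝ) : ℂ) * Complex.I by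
    push_cast; ring, Complex.div_ofReal_re, Complex.exp_ofReal_mul_I_re]

theorem integral_exp_neg_mul_cos (b : ℝ) :
    ∫ t in Ioi (0 : ℝ), rexp (-t) * cos (b * t) = (1 + b ^ 2)⁻¹ := by
  have ha : (-1 + b * Complex.I).re < 0 := by simp
  have h := integral_re (integrableOn_exp_mul_complex_Ioi ha 0)
  rw [integral_exp_mul_complex_Ioi ha 0] at h
  convert h using 1
  · congr 1 with t
    simp [Complex.exp_re]
  · simp [Complex.div_re, Complex.normSq_apply]
    field_simp

theorem integral_inv_cosh_div_one_add_sq (b : ℝ) :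
    ∫ x : ℝ, (cosh x)⁻¹ / (1 + (b * x) ^ 2) =
      π * ∫ t in Ioi (0 : ℝ), rexp (-t) / cosh (π * b * t / 2) := by
  set F : ℝ → ℝ → ℝ := fun x t => rexp (-t) * (cos (b * t * x) / cosh x)
  have hF : Integrable (Function.uncurry F) (volume.prod (volume.restrict (Ioi 0))) := by
    refine (integrable_inv_cosh.mul_prod (exp_neg_integrableOn_Ioi 0 one_pos)).mono'
      (Measurable.aestronglyMeasurable (by fun_prop)) (Eventually.of_forall fun p => ?_)
    simp only [Function.uncurry, F, norm_mul, norm_div, Real.norm_eq_abs, abs_exp,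
      abs_of_pos (cosh_pos _), neg_one_mul]
    rw [mul_comm, div_eq_mul_inv]
    gcongr
    exact mul_le_of_le_one_left (by positivity) (abs_cos_le_one _)
  calc ∫ x : ℝ, (cosh x)⁻¹ / (1 + (b * x) ^ 2)
      = ∫ x : ℝ, ∫ t in Ioi (0 : ℝ), F x t := by
        congr 1 with x
        have hFx (t : ℝ) : F x t = (cosh x)⁻¹ * (rexp (-t) * cos (b * x * t)) := by
          simp only [F]; ring_nf
        simp only [hFx, integral_const_mul, integral_exp_neg_mul_cos, div_eq_mul_inv]
    _ = ∫ t in Ioi (0 : ℝ), ∫ x : ℝ, F x t := integral_integral_swap hF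
    _ = ∫ t in Ioi (0 : ℝ), π * (rexp (-t) / cosh (π * b * t / 2)) := by
        congr 1 with t
        rw [integral_const_mul, integral_cos_mul_div_cosh, mul_assoc]
        ring
    _ = π * ∫ t in Ioi (0 : ℝ), rexp (-t) / cosh (π * b * t / 2) := integral_const_mul _ _

theorem integral_exp_neg_div_cosh : ∫ t in Ioi (0 : ℝ), rexp (-t) / cosh t = log 2 := by
  have hderiv (t : ℝ) : HasDerivAt (fun t => -log (1 + rexp (-2 * t))) (rexp (-t) / cosh t) t := by
    refine ((((hasDerivAt_id' t).const_mul (-2)).exp.const_add 1).log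
      (by positivity)).neg.congr_deriv ?_
    rw [cosh_eq, exp_neg, exp_neg_two_mul]
    field_simp
  have hlim : Tendsto (fun t => -log (1 + rexp (-2 * t))) atTop (𝓝 0) := by
    have h : Tendsto (fun t : ℝ => rexp (-2 * t)) atTop (𝓝 0) :=
      tendsto_exp_atBot.comp (tendsto_id.const_mul_atTop_of_neg (by norm_num))
    simpa using ((h.const_add 1).log (by norm_num)).neg
  rw [integral_Ioi_of_hasDerivAt_of_nonneg' (fun t _ => hderiv t)
    (fun t _ => by positivity) hlim]
  norm_num

/-- `κ` is a probability density on ℝ. -/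
theorem kJ_is_probability_density : ∫ ω : ℝ, kJ ω = 1 := by
  have hkJ (ω : ℝ) : kJ ω = 2 / log 4 * ((cosh (π * ω))⁻¹ / (1 + (2 / π * (π * ω)) ^ 2)) := by
    rw [kJ, sech_eq_inv_cosh]
    field_simp
    ring
  have hlog4 : log 4 = 2 * log 2 := by
    rw [show (4 : ℝ) = 2 ^ 2 by norm_num, log_pow, Nat.cast_ofNat]
  simp only [hkJ, integral_const_mul]
  rw [Measure.integral_comp_mul_left (fun x => (cosh x)⁻¹ / (1 + (2 / π * x) ^ 2)),
    integral_inv_cosh_div_one_add_sq]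
  simp only [show ∀ t, π * (2 / π) * t / 2 = t from fun t => by field_simp]
  rw [integral_exp_neg_div_cosh, hlog4, abs_of_pos (inv_pos.2 pi_pos), smul_eq_mul]
  field_simp
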